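/- arXiv:2604.07216 — 3 statements merged into one kernel-verified Lean document; each statement's English description precedes it below -/
import Mathlib

section
/- Let X be a real Hilbert space, φ : X → (−∞,+∞] proper, closed, convex, A ∈ L(X,Y) for a real Hilbert space Y, 𝔄 ⊂ Y nonempty closed convex bounded, r > 0, z ∈ X, x₀ ∈ X, b ∈ Y. Define ψ(x) := φ(x) + σ_𝔄(A(x−x₀)+b). If θ̄ ∈ 𝔄 maximizes the dual function d(θ) := min_{x∈X} { (1/(2r))‖x−z‖² + φ(x) + ⟨θ, A(x−x₀)+b⟩ } over 𝔄, then prox_{rψ}(z) = prox_{rφ}(z − r A*θ̄). -/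
noncomputable section

/-- A function into the extended reals is proper if it never takes the value `-∞`
and is not identically `+∞`. -/
def ProperFn {X : Type*} (ψ : X → EReal) : Prop :=
  (∀ x, ψ x ≠ ⊥) ∧ ∃ x, ψ x ≠ ⊤

/-- Convexity for extended-real-valued functions. -/
def ConvexFnE {X : Type*} [AddCommMonoid X] [Module ℝ X] (ψ : X → EReal) : Prop :=
  ∀ x y : X, ∀ a b : ℝ, 0 ≤ a → 0 ≤ b → a + b = 1 →
    ψ (a • x + b • y) ≤ (a : EReal) * ψ x + (b : EReal) * ψ y

/-- The objective function defining the proximity operator `prox_{tψ}(z)`. -/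
def proxObj {X : Type*} [NormedAddCommGroup X] (ψ : X → EReal) (t : ℝ) (z x : X) : EReal :=
  (((1 / (2 * t)) * ‖x - z‖ ^ 2 : ℝ) : EReal) + ψ x

/-- `p` is the proximal point `prox_{tψ}(z)`, i.e. a (the) global minimizer of the
prox objective. -/
def IsProx {X : Type*} [NormedAddCommGroup X] (ψ : X → EReal) (t : ℝ) (z p : X) : Prop :=
  ∀ x, proxObj ψ t z p ≤ proxObj ψ t z x

/-- The convex subdifferential of an extended-real-valued function. -/
def subdiffE {X : Type*} [NormedAddCommGroup X] [InnerProductSpace ℝ X]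
    (ψ : X → EReal) (x : X) : Set X :=
  {v | ∀ y, ψ x + ((inner ℝ v (y - x) : ℝ) : EReal) ≤ ψ y}

/-- The support function of a set `C` in a real Hilbert space. -/
def supportFn {Y : Type*} [NormedAddCommGroup Y] [InnerProductSpace ℝ Y]
    (C : Set Y) (y : Y) : ℝ :=
  sSup ((fun v => (inner ℝ v y : ℝ)) '' C)

/-
Up to an additive constant, `L θ` is the prox objective of `φ` at `z - r A*θ`; midpoint
convexity and the parallelogram law make it grow quadratically around its minimizer:
`L θ x ≥ L θ (p̄ θ) + ‖x - p̄ θ‖² / (4r)`. Fix `θ ∈ 𝔄`, put `θₜ = θ̄ + t (θ - θ̄)`,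
`s = ‖p̄ θₜ - p̄ θ̄‖` and `v = ⟪θ - θ̄, A (p̄ θ̄ - x₀) + b⟫`. Comparing `d(θₜ) ≤ d(θ̄)` with this
growth, and using that `x ↦ A (x - x₀) + b` is `‖A‖`-Lipschitz, gives
`s² / (4r) + t v ≤ t ‖θ - θ̄‖ ‖A‖ s`; minimizing over `s` shows `v = O(t)`,
hence `v ≤ 0`. So `θ̄` attains `σ_𝔄` at `A (p̄ θ̄ - x₀) + b`: the prox objective of `ψ`
dominates `L θ̄` and agrees with it at `p̄ θ̄`, which is therefore both `prox_{rψ}(z)` and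
`prox_{rφ}(z - r A*θ̄)`. Prox points of proper convex functions are unique.
-/

open Bornology Set
open scoped InnerProductSpace

lemma EReal.le_of_add_coe_le_add_coe {a b : EReal} {c : ℝ} (h : a + c ≤ b + c) : a ≤ b := by
  have h' := EReal.sub_le_sub h (le_refl (c : EReal))
  rwa [EReal.add_sub_cancel_right, EReal.add_sub_cancel_right] at h'

section Prox

variable {X : Type*} [NormedAddCommGroup X] {f : X → EReal} {t : ℝ} {z p q : X}

lemma IsProx.ne_top (hf : ProperFn f) (hp : IsProx f t z p) : f p ≠ ⊤ := by
  obtain ⟨x, hx⟩ := hf.2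
  lift f x to ℝ using ⟨hx, hf.1 x⟩ with a hfx
  intro htop
  have := hp x
  rw [proxObj, proxObj, htop, ← hfx, EReal.coe_add_top, top_le_iff, ← EReal.coe_add] at this
  exact EReal.coe_ne_top _ this

variable [InnerProductSpace ℝ X]

lemma norm_midpoint_sub_sq (u v w : X) :
    ‖((1/2 : ℝ) • u + (1/2 : ℝ) • v) - w‖ ^ 2
      = 1/2 * ‖u - w‖ ^ 2 + 1/2 * ‖v - w‖ ^ 2 - 1/4 * ‖u - v‖ ^ 2 := by
  have hp := parallelogram_law_with_norm ℝ (u - w) (v - w)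
  rw [show (u - w) - (v - w) = u - v by abel] at hp
  rw [show ((1/2 : ℝ) • u + (1/2 : ℝ) • v) - w = (1/2 : ℝ) • ((u - w) + (v - w)) by module,
    norm_smul, mul_pow]
  norm_num
  linarith

theorem IsProx.add_sq_le (hf : ProperFn f) (hconv : ConvexFnE f) (ht : 0 < t)
    (hp : IsProx f t z p) (x : X) :
    proxObj f t z p + ((1 / (4 * t) * ‖x - p‖ ^ 2 : ℝ) : EReal) ≤ proxObj f t z x := by
  have hmid := hconv x p (1/2) (1/2) (by norm_num) (by norm_num) (by norm_num)
  have key := hp ((1/2 : ℝ) • x + (1/2 : ℝ) • p)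
  rcases eq_or_ne (f x) ⊤ with hx | hx
  · simp only [proxObj, hx, EReal.coe_add_top, le_top]
  unfold proxObj at key ⊢
  lift f p to ℝ using ⟨hp.ne_top hf, hf.1 p⟩ with a
  lift f x to ℝ using ⟨hx, hf.1 x⟩ with c
  have := key.trans (add_le_add_right hmid _)
  norm_cast at this ⊢
  rw [norm_midpoint_sub_sq] at this
  rw [show 1 / (4 * t) = 1 / (2 * t) / 2 by field_simp; ring]
  linarith

theorem IsProx.eq (hf : ProperFn f) (hconv : ConvexFnE f) (ht : 0 < t)
    (hp : IsProx f t z p) (hq : IsProx f t z q) : p = q := by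
  have h := (hp.add_sq_le hf hconv ht q).trans (hq p)
  unfold proxObj at h
  lift f p to ℝ using ⟨hp.ne_top hf, hf.1 p⟩ with a
  norm_cast at h
  have hpos : 0 < 1 / (4 * t) := by positivity
  have : ‖q - p‖ ^ 2 = 0 := le_antisymm (by nlinarith) (sq_nonneg _)
  exact (sub_eq_zero.1 (norm_eq_zero.1 (pow_eq_zero_iff two_ne_zero |>.1 this))).symm

lemma proxObj_add_inner (ht : t ≠ 0) (z w x : X) :
    proxObj f t z x + (⟪w, x⟫_ℝ : EReal)
      = proxObj f t (z - t • w) x + ((⟪w, z⟫_ℝ - t / 2 * ‖w‖ ^ 2 : ℝ) : EReal) := by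
  unfold proxObj
  rw [add_right_comm, add_right_comm _ (f x), ← EReal.coe_add, ← EReal.coe_add]
  congr 2
  rw [show x - (z - t • w) = (x - z) + t • w by abel, norm_add_sq_real, norm_smul,
    real_inner_smul_right, inner_sub_left, real_inner_comm w x, real_inner_comm w z,
    Real.norm_eq_abs, mul_pow, sq_abs]
  field_simp
  ring

lemma proxObj_add_inner_map_sub_add {Y : Type*} [NormedAddCommGroup Y] [InnerProductSpace ℝ Y]
    [CompleteSpace X] [CompleteSpace Y] (ht : t ≠ 0) (A : X →L[ℝ] Y) (θ : Y) (x₀ z x : X)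
    (b : Y) :
    proxObj f t z x + (⟪θ, A (x - x₀) + b⟫_ℝ : EReal)
      = proxObj f t (z - t • ContinuousLinearMap.adjoint A θ) x
        + ((⟪ContinuousLinearMap.adjoint A θ, z⟫_ℝ
          - t / 2 * ‖ContinuousLinearMap.adjoint A θ‖ ^ 2 + ⟪θ, b - A x₀⟫_ℝ : ℝ) : EReal) := by
  have : ⟪θ, A (x - x₀) + b⟫_ℝ = ⟪ContinuousLinearMap.adjoint A θ, x⟫_ℝ + ⟪θ, b - A x₀⟫_ℝ := by
    rw [ContinuousLinearMap.adjoint_inner_left, map_sub, inner_add_right, inner_sub_right,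
      inner_sub_right]
    ring
  rw [this, EReal.coe_add, ← add_assoc, proxObj_add_inner ht, EReal.coe_add, add_assoc]

end Prox

section SupportFn

variable {Y : Type*} [NormedAddCommGroup Y] [InnerProductSpace ℝ Y] {C : Set Y}

lemma le_supportFn (hC : IsBounded C) {θ : Y} (hθ : θ ∈ C) (y : Y) :
    ⟪θ, y⟫_ℝ ≤ supportFn C y := by
  obtain ⟨M, hM⟩ := hC.exists_norm_le
  refine le_csSup ⟨M * ‖y‖, ?_⟩ ⟨θ, hθ, rfl⟩
  rintro _ ⟨v, hv, rfl⟩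
  exact (real_inner_le_norm v y).trans (by gcongr; exact hM v hv)

lemma supportFn_le (hne : C.Nonempty) {y : Y} {c : ℝ} (h : ∀ θ ∈ C, ⟪θ, y⟫_ℝ ≤ c) :
    supportFn C y ≤ c :=
  csSup_le (hne.image _) (by rintro _ ⟨θ, hθ, rfl⟩; exact h θ hθ)

lemma convexOn_supportFn (hne : C.Nonempty) (hC : IsBounded C) :
    ConvexOn ℝ univ (supportFn C) := by
  refine ⟨convex_univ, fun x _ y _ a b ha hb _ => supportFn_le hne fun θ hθ => ?_⟩
  rw [inner_add_right, real_inner_smul_right, real_inner_smul_right, smul_eq_mul, smul_eq_mul]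
  gcongr <;> exact le_supportFn hC hθ _

lemma convexOn_supportFn_affine {X : Type*} [NormedAddCommGroup X] [NormedSpace ℝ X]
    (hne : C.Nonempty) (hC : IsBounded C) (A : X →L[ℝ] Y) (x₀ : X) (b : Y) :
    ConvexOn ℝ univ fun x => supportFn C (A (x - x₀) + b) :=
  (convexOn_supportFn hne hC).comp_affineMap
    ⟨fun x => A (x - x₀) + b, A.toLinearMap, fun x v => by simp; abel⟩

lemma isProx_add_supportFn {X : Type*} [NormedAddCommGroup X] {f : X → EReal} {t : ℝ}
    {z p : X} {g : X → Y} {θb : Y} (hC : IsBounded C) (hθb : θb ∈ C)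
    (hmin : ∀ x, proxObj f t z p + (⟪θb, g p⟫_ℝ : EReal) ≤ proxObj f t z x + (⟪θb, g x⟫_ℝ : EReal))
    (hmax : ∀ θ ∈ C, ⟪θ, g p⟫_ℝ ≤ ⟪θb, g p⟫_ℝ) :
    IsProx (fun x => f x + (supportFn C (g x) : EReal)) t z p := by
  have hσ : supportFn C (g p) = ⟪θb, g p⟫_ℝ :=
    IsGreatest.csSup_eq ⟨⟨θb, hθb, rfl⟩, by rintro _ ⟨θ, hθ, rfl⟩; exact hmax θ hθ⟩
  intro x
  calc proxObj _ t z p = proxObj f t z p + (⟪θb, g p⟫_ℝ : EReal) := by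
        rw [proxObj, proxObj, hσ, add_assoc]
    _ ≤ proxObj f t z x + (⟪θb, g x⟫_ℝ : EReal) := hmin x
    _ ≤ proxObj _ t z x := by
        rw [proxObj, proxObj, add_assoc]
        gcongr
        exact_mod_cast le_supportFn hC hθb _

end SupportFn

section
variable {X : Type*} {f : X → EReal} {g : X → ℝ}

lemma ProperFn.add_coe (hf : ProperFn f) : ProperFn fun x => f x + (g x : EReal) := by
  obtain ⟨hbot, x, hx⟩ := hf
  exact ⟨fun y => EReal.add_ne_bot_iff.2 ⟨hbot y, EReal.coe_ne_bot _⟩, x,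
    EReal.add_ne_top hx (EReal.coe_ne_top _)⟩

lemma ConvexFnE.add_coe [AddCommMonoid X] [Module ℝ X] (hf : ConvexFnE f)
    (hg : ConvexOn ℝ univ g) : ConvexFnE fun x => f x + (g x : EReal) := by
  intro x y a b ha hb hab
  calc f (a • x + b • y) + (g (a • x + b • y) : EReal)
      ≤ (a * f x + b * f y) + ((a * g x + b * g y : ℝ) : EReal) :=
        add_le_add (hf x y a b ha hb hab)
          (EReal.coe_le_coe_iff.2 (hg.2 (mem_univ x) (mem_univ y) ha hb hab))
    _ = a * (f x + g x) + b * (f y + g y) := by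
        rw [EReal.left_distrib_of_nonneg_of_ne_top (by exact_mod_cast ha) (EReal.coe_ne_top a),
          EReal.left_distrib_of_nonneg_of_ne_top (by exact_mod_cast hb) (EReal.coe_ne_top b),
          EReal.coe_add, EReal.coe_mul, EReal.coe_mul]
        abel

end

lemma nonpos_of_forall_sq_add_le {c v N : ℝ} (hc : 0 < c)
    (h : ∀ t ∈ Ioc (0 : ℝ) 1, ∃ s : ℝ, c * s ^ 2 + t * v ≤ t * N * s) : v ≤ 0 := by
  have hbound : ∀ t ∈ Ioc (0 : ℝ) 1, 4 * c * v ≤ t * N ^ 2 := by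
    rintro t ⟨ht0, ht1⟩
    obtain ⟨s, hs⟩ := h t ⟨ht0, ht1⟩
    refine le_of_mul_le_mul_left ?_ ht0
    nlinarith [sq_nonneg (2 * c * s - t * N)]
  by_contra! hv
  have ha : 0 < 4 * c * v := by positivity
  have := hbound (4 * c * v / (N ^ 2 + 4 * c * v))
    ⟨by positivity, (div_le_one (by positivity)).2 (by nlinarith [sq_nonneg N])⟩
  rw [div_mul_eq_mul_div, le_div_iff₀ (by positivity)] at this
  nlinarith

theorem inner_le_inner_of_dual_max {X Y : Type*} [NormedAddCommGroup X] [NormedAddCommGroup Y]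
    [InnerProductSpace ℝ Y] {F : X → EReal} {g : X → Y} {pbar : Y → X} {C : Set Y} {θb : Y}
    {c K : ℝ} (hc : 0 < c) (hg : ∀ x y, ‖g x - g y‖ ≤ K * ‖x - y‖) (hC : Convex ℝ C)
    (hθb : θb ∈ C) (hbot : ∀ x, F x ≠ ⊥) (htop : F (pbar θb) ≠ ⊤)
    (hgrowth : ∀ x, F (pbar θb) + (⟪θb, g (pbar θb)⟫_ℝ : EReal) + (c * ‖x - pbar θb‖ ^ 2 : ℝ)
      ≤ F x + (⟪θb, g x⟫_ℝ : EReal))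
    (hmax : ∀ θ ∈ C, F (pbar θ) + (⟪θ, g (pbar θ)⟫_ℝ : EReal)
      ≤ F (pbar θb) + (⟪θb, g (pbar θb)⟫_ℝ : EReal)) :
    ∀ θ ∈ C, ⟪θ, g (pbar θb)⟫_ℝ ≤ ⟪θb, g (pbar θb)⟫_ℝ := by
  intro θ hθ
  rw [← sub_nonpos, ← inner_sub_left]
  refine nonpos_of_forall_sq_add_le (N := ‖θ - θb‖ * K) hc fun t ht =>
    ⟨‖pbar (θb + t • (θ - θb)) - pbar θb‖, ?_⟩
  have hmax_t := hmax _ (hC.add_smul_sub_mem hθb hθ (Ioc_subset_Icc_self ht))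
  have hgrowth_t := hgrowth (pbar (θb + t • (θ - θb)))
  set p := pbar θb
  set pt := pbar (θb + t • (θ - θb))
  lift F p to ℝ using ⟨htop, hbot p⟩ with a
  have hpt_top : F pt ≠ ⊤ := by
    intro h
    rw [h, EReal.top_add_coe, top_le_iff, ← EReal.coe_add] at hmax_t
    exact EReal.coe_ne_top _ hmax_t
  lift F pt to ℝ using ⟨hpt_top, hbot pt⟩ with e
  norm_cast at hmax_t hgrowth_t
  have hlin : ⟪θb + t • (θ - θb), g pt⟫_ℝ = ⟪θb, g pt⟫_ℝ + t * ⟪θ - θb, g pt⟫_ℝ := by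
    rw [inner_add_left, real_inner_smul_left]
  have hlip : ⟪θ - θb, g p⟫_ℝ ≤ ⟪θ - θb, g pt⟫_ℝ + ‖θ - θb‖ * K * ‖pt - p‖ := by
    have := (real_inner_le_norm (θ - θb) (g p - g pt)).trans
      (mul_le_mul_of_nonneg_left (hg p pt) (norm_nonneg _))
    rw [inner_sub_right, norm_sub_rev p] at this
    linarith
  nlinarith [mul_le_mul_of_nonneg_left hlip ht.1.le]

theorem stmt_11_general {X Y : Type*} [NormedAddCommGroup X] [InnerProductSpace ℝ X] [CompleteSpace X]
    [NormedAddCommGroup Y] [InnerProductSpace ℝ Y] [CompleteSpace Y]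
    (φ : X → EReal) (hproper : ProperFn φ) (hconv : ConvexFnE φ)
    (A : X →L[ℝ] Y)
    (𝔄 : Set Y) (hne : 𝔄.Nonempty) (hconvA : Convex ℝ 𝔄)
    (M : ℝ) (hM : ∀ θ ∈ 𝔄, ‖θ‖ ≤ M)
    (r : ℝ) (hr : 0 < r) (z x₀ : X) (b : Y)
    -- the Lagrangian of the dual problem
    (L : Y → X → EReal)
    (hL : ∀ θ x, L θ x =
      (((1 / (2 * r)) * ‖x - z‖ ^ 2 + (inner ℝ θ (A (x - x₀) + b) : ℝ) : ℝ) : EReal) + φ x)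
    -- for each θ, `pbar θ` is the unique minimizer of the inner problem
    (pbar : Y → X) (hpbar : ∀ θ : Y, ∀ x : X, L θ (pbar θ) ≤ L θ x)
    -- θb maximizes the dual function d(θ) = min_x L(θ,x) over 𝔄
    (θb : Y) (hθbmem : θb ∈ 𝔄) (hθbmax : ∀ θ ∈ 𝔄, L θ (pbar θ) ≤ L θb (pbar θb)) :
    -- prox_{rψ}(z) = prox_{rφ}(z - r A* θb), where ψ(x) = φ(x) + σ_𝔄(A(x-x₀)+b)
    ∀ q pφ : X,
      IsProx (fun x => φ x + ((supportFn 𝔄 (A (x - x₀) + b) : ℝ) : EReal)) r z q →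
      IsProx φ r (z - r • (ContinuousLinearMap.adjoint A) θb) pφ →
      q = pφ := by
  intro q pφ hq hpφ
  have hbdd : IsBounded 𝔄 := isBounded_iff_forall_norm_le.2 ⟨M, hM⟩
  have hLprox : ∀ θ x, L θ x = proxObj φ r z x + (⟪θ, A (x - x₀) + b⟫_ℝ : EReal) := by
    intro θ x
    rw [hL, proxObj, EReal.coe_add, add_right_comm]
  simp only [hLprox] at hpbar hθbmax
  have hshift := fun x => proxObj_add_inner_map_sub_add (f := φ) hr.ne' A θb x₀ z x b
  have hpφ' : IsProx φ r (z - r • ContinuousLinearMap.adjoint A θb) (pbar θb) := fun x =>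
    EReal.le_of_add_coe_le_add_coe (by rw [← hshift, ← hshift]; exact hpbar θb x)
  have hVI : ∀ θ ∈ 𝔄, ⟪θ, A (pbar θb - x₀) + b⟫_ℝ ≤ ⟪θb, A (pbar θb - x₀) + b⟫_ℝ := by
    refine inner_le_inner_of_dual_max (F := proxObj φ r z) (g := fun x => A (x - x₀) + b)
      (c := 1 / (4 * r)) (K := ‖A‖) (by positivity) (fun x y => ?_) hconvA hθbmem
      (fun x => EReal.add_ne_bot_iff.2 ⟨EReal.coe_ne_bot _, hproper.1 x⟩)
      (EReal.add_ne_top (EReal.coe_ne_top _) (hpφ'.ne_top hproper)) (fun x => ?_) hθbmax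
    · rw [add_sub_add_right_eq_sub, ← map_sub, sub_sub_sub_cancel_right]
      exact A.le_opNorm _
    · rw [hshift, hshift, add_right_comm]
      exact add_le_add_left (hpφ'.add_sq_le hproper hconv hr x) _
  have hpψ := isProx_add_supportFn (g := fun x => A (x - x₀) + b) hbdd hθbmem (hpbar θb) hVI
  exact (hq.eq hproper.add_coe (hconv.add_coe (convexOn_supportFn_affine hne hbdd A x₀ b)) hr
    hpψ).trans (hpφ'.eq hproper hconv hr hpφ)

theorem stmt_11 {X Y : Type*} [NormedAddCommGroup X] [InnerProductSpace ℝ X] [CompleteSpace X]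
    [NormedAddCommGroup Y] [InnerProductSpace ℝ Y] [CompleteSpace Y]
    (φ : X → EReal) (hproper : ProperFn φ) (hconv : ConvexFnE φ)
    (hlsc : LowerSemicontinuous φ)
    (A : X →L[ℝ] Y)
    (𝔄 : Set Y) (hne : 𝔄.Nonempty) (hclosed : IsClosed 𝔄) (hconvA : Convex ℝ 𝔄)
    (M : ℝ) (hM : ∀ θ ∈ 𝔄, ‖θ‖ ≤ M)
    (r : ℝ) (hr : 0 < r) (z x₀ : X) (b : Y)
    -- the Lagrangian of the dual problem
    (L : Y → X → EReal)
    (hL : ∀ θ x, L θ x =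
      (((1 / (2 * r)) * ‖x - z‖ ^ 2 + (inner ℝ θ (A (x - x₀) + b) : ℝ) : ℝ) : EReal) + φ x)
    -- for each θ, `pbar θ` is the unique minimizer of the inner problem
    (pbar : Y → X) (hpbar : ∀ θ : Y, ∀ x : X, L θ (pbar θ) ≤ L θ x)
    -- θb maximizes the dual function d(θ) = min_x L(θ,x) over 𝔄
    (θb : Y) (hθbmem : θb ∈ 𝔄) (hθbmax : ∀ θ ∈ 𝔄, L θ (pbar θ) ≤ L θb (pbar θb)) :
    -- prox_{rψ}(z) = prox_{rφ}(z - r A* θb), where ψ(x) = φ(x) + σ_𝔄(A(x-x₀)+b)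
    ∀ q pφ : X,
      IsProx (fun x => φ x + ((supportFn 𝔄 (A (x - x₀) + b) : ℝ) : EReal)) r z q →
      IsProx φ r (z - r • (ContinuousLinearMap.adjoint A) θb) pφ →
      q = pφ :=
  stmt_11_general φ hproper hconv A 𝔄 hne hconvA M hM r hr z x₀ b L hL pbar hpbar θb hθbmem hθbmax
end
end

section
/- Let X, Y be real Hilbert spaces, φ : X → (−∞,+∞] proper, closed, convex, A ∈ L(X,Y), r > 0, z ∈ X, x₀ ∈ X, b ∈ Y. Define d(θ) := (1/(2r))‖p̄(θ)−z‖² + φ(p̄(θ)) + ⟨θ, A(p̄(θ)−x₀)+b⟩ where p̄(θ) := prox_{rφ}(z − r A*θ). Then d is concave and Fréchet differentiable on Y with ∇d(θ) = A(p̄(θ) − x₀) + b, and ∇d is Lipschitz continuous with modulus r‖A‖²_{L(X,Y)}. -/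
noncomputable section

/-!
With `L(x, θ) := (1/(2r))‖x - z‖² + φ x + ⟪θ, A (x - x₀) + b⟫`, completing the square shows that
`p̄ θ = prox_{rφ}(z - r A* θ)` minimizes `L(·, θ)`, so `d θ = min_x L(x, θ)`. Since `L(x, ·)` is
affine, `d θ₂ ≤ L(p̄ θ₁, θ₂) = d θ₁ + ⟪A (p̄ θ₁ - x₀) + b, θ₂ - θ₁⟫`: the candidate gradient is a
supergradient, which gives concavity. Firm nonexpansiveness of the prox makes the supergradient
Lipschitz with constant `r ‖A‖²`, and a function with a continuous supergradient is differentiable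
with that gradient.
-/

open RealInnerProductSpace Filter Topology

section Supergradient

variable {E : Type*} [NormedAddCommGroup E] [InnerProductSpace ℝ E] {f : E → ℝ} {g : E → E}

theorem concaveOn_univ_of_le_add_inner (hfg : ∀ x y, f y ≤ f x + ⟪g x, y - x⟫) :
    ConcaveOn ℝ Set.univ f := by
  refine ⟨convex_univ, fun x _ y _ a b ha hb hab => ?_⟩
  set m := a • x + b • y
  have hcancel : a * ⟪g m, x - m⟫ + b * ⟪g m, y - m⟫ = 0 := by
    rw [← real_inner_smul_right, ← real_inner_smul_right, ← inner_add_right]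
    convert inner_zero_right (g m) using 2
    rw [show a • (x - m) + b • (y - m) = (1 - (a + b)) • m by module, hab, sub_self, zero_smul]
  simp only [smul_eq_mul]
  calc a * f x + b * f y ≤ a * (f m + ⟪g m, x - m⟫) + b * (f m + ⟪g m, y - m⟫) := by
        gcongr
        exacts [hfg m x, hfg m y]
    _ = f m := by linear_combination f m * hab + hcancel

theorem hasGradientAt_of_le_add_inner [CompleteSpace E] (hfg : ∀ x y, f y ≤ f x + ⟪g x, y - x⟫)
    {x : E} (hg : ContinuousAt g x) : HasGradientAt f (g x) x := by
  rw [hasGradientAt_iff_isLittleO, Asymptotics.isLittleO_iff]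
  intro ε hε
  filter_upwards [Metric.tendsto_nhds.mp hg ε hε] with y hy
  rw [dist_eq_norm] at hy
  have upper := hfg x y
  have lower : f x + ⟪g y, y - x⟫ ≤ f y := by
    have := hfg y x
    rw [← neg_sub, inner_neg_right] at this
    linarith
  have hcs : |⟪g y - g x, y - x⟫| ≤ ε * ‖y - x‖ :=
    (abs_real_inner_le_norm _ _).trans (by gcongr)
  rw [inner_sub_left, abs_le] at hcs
  rw [Real.norm_eq_abs, abs_le]
  constructor <;> linarith [hcs.1]

end Supergradient

theorem ConvexFnE.le_coe_add {X : Type*} [AddCommMonoid X] [Module ℝ X] {φ : X → EReal}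
    (hφ : ConvexFnE φ) {x y : X} (hx : φ x ≠ ⊤) (hx' : φ x ≠ ⊥) (hy : φ y ≠ ⊤) (hy' : φ y ≠ ⊥)
    {a b : ℝ} (ha : 0 ≤ a) (hb : 0 ≤ b) (hab : a + b = 1) :
    φ (a • x + b • y) ≤ ((a * (φ x).toReal + b * (φ y).toReal : ℝ) : EReal) := by
  have h := hφ x y a b ha hb hab
  rwa [← EReal.coe_toReal hx hx', ← EReal.coe_toReal hy hy'] at h

namespace IsProx

variable {X : Type*} [NormedAddCommGroup X] {φ : X → EReal} {t : ℝ} {w p : X}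

theorem apply_ne_top (hp : IsProx φ t w p) {x : X} (hx : φ x ≠ ⊤) : φ p ≠ ⊤ := by
  intro hpt
  have h := hp x
  rw [proxObj, proxObj, hpt, EReal.add_top_of_ne_bot (EReal.coe_ne_bot _), top_le_iff] at h
  exact EReal.add_lt_top (EReal.coe_ne_top _) hx |>.ne h

theorem toReal_le (hp : IsProx φ t w p) (hbot : ∀ x, φ x ≠ ⊥) {x : X} (hx : φ x ≠ ⊤) :
    1 / (2 * t) * ‖p - w‖ ^ 2 + (φ p).toReal ≤ 1 / (2 * t) * ‖x - w‖ ^ 2 + (φ x).toReal := by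
  have h := hp x
  rw [proxObj, proxObj, ← EReal.coe_toReal hx (hbot x),
    ← EReal.coe_toReal (hp.apply_ne_top hx) (hbot p)] at h
  exact_mod_cast h

variable [InnerProductSpace ℝ X]

/-- The variational inequality of the prox: `(w - p) / t ∈ ∂φ(p)`. -/
theorem inner_le (hp : IsProx φ t w p) (hbot : ∀ x, φ x ≠ ⊥) (hconv : ConvexFnE φ) (ht : 0 < t)
    {x : X} (hx : φ x ≠ ⊤) : ⟪w - p, x - p⟫ ≤ t * ((φ x).toReal - (φ p).toReal) := by
  have hpt := hp.apply_ne_top hx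
  -- compare `p` with `(1 - s) • p + s • x` and let `s → 0⁺`
  have step : ∀ s ∈ Set.Ioo (0 : ℝ) 1,
      ⟪w - p, x - p⟫ ≤ s / 2 * ‖x - p‖ ^ 2 + t * ((φ x).toReal - (φ p).toReal) := by
    rintro s ⟨hs₀, hs₁⟩
    have hconvq := hconv.le_coe_add (a := 1 - s) (b := s) hpt (hbot p) hx (hbot x)
      (by linarith) hs₀.le (by ring)
    have hqt := ne_top_of_le_ne_top (EReal.coe_ne_top _) hconvq
    have hφq : (φ ((1 - s) • p + s • x)).toReal ≤ (1 - s) * (φ p).toReal + s * (φ x).toReal := by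
      have h := EReal.toReal_le_toReal hconvq (hbot _) (EReal.coe_ne_top _)
      rwa [EReal.toReal_coe] at h
    have hmin := hp.toReal_le hbot hqt
    have hexpand : ‖(1 - s) • p + s • x - w‖ ^ 2
        = ‖p - w‖ ^ 2 - 2 * s * ⟪w - p, x - p⟫ + s ^ 2 * ‖x - p‖ ^ 2 := by
      rw [show (1 - s) • p + s • x - w = (p - w) + s • (x - p) by module, norm_add_sq_real,
        real_inner_smul_right, norm_smul, Real.norm_eq_abs, abs_of_pos hs₀, ← neg_sub w p,
        inner_neg_left]
      ring
    rw [hexpand] at hmin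
    have hgain : 0 ≤ t * (1 / (2 * t) * (s ^ 2 * ‖x - p‖ ^ 2 - 2 * s * ⟪w - p, x - p⟫)
        + s * ((φ x).toReal - (φ p).toReal)) := mul_nonneg ht.le (by linarith)
    have hfactor : t * (1 / (2 * t) * (s ^ 2 * ‖x - p‖ ^ 2 - 2 * s * ⟪w - p, x - p⟫)
        + s * ((φ x).toReal - (φ p).toReal))
        = s * (s / 2 * ‖x - p‖ ^ 2 + t * ((φ x).toReal - (φ p).toReal) - ⟪w - p, x - p⟫) := by
      field_simp
      ring
    rw [hfactor] at hgain
    linarith [nonneg_of_mul_nonneg_right hgain hs₀]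
  have hlim : Tendsto (fun s : ℝ => s / 2 * ‖x - p‖ ^ 2 + t * ((φ x).toReal - (φ p).toReal))
      (𝓝[>] 0) (𝓝 (0 / 2 * ‖x - p‖ ^ 2 + t * ((φ x).toReal - (φ p).toReal))) :=
    (Continuous.tendsto (by fun_prop) _).mono_left nhdsWithin_le_nhds
  simpa using ge_of_tendsto hlim (eventually_of_mem (Ioo_mem_nhdsGT one_pos) step)

variable {w₁ w₂ p₁ p₂ : X}

theorem norm_sub_sq_le_inner (hp₁ : IsProx φ t w₁ p₁) (hp₂ : IsProx φ t w₂ p₂)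
    (hφ : ProperFn φ) (hconv : ConvexFnE φ) (ht : 0 < t) :
    ‖p₁ - p₂‖ ^ 2 ≤ ⟪p₁ - p₂, w₁ - w₂⟫ := by
  obtain ⟨hbot, x, hx⟩ := hφ
  have h₁ := hp₁.inner_le hbot hconv ht (hp₂.apply_ne_top hx)
  have h₂ := hp₂.inner_le hbot hconv ht (hp₁.apply_ne_top hx)
  have hsum : ⟪w₁ - p₁, p₂ - p₁⟫ + ⟪w₂ - p₂, p₁ - p₂⟫ = ‖p₁ - p₂‖ ^ 2 - ⟪p₁ - p₂, w₁ - w₂⟫ := by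
    rw [← neg_sub p₁ p₂, inner_neg_right, neg_add_eq_sub, ← inner_sub_left,
      ← real_inner_self_eq_norm_sq, ← inner_sub_right, real_inner_comm (p₁ - p₂)]
    congr 1
    abel
  linarith

theorem norm_sub_le (hp₁ : IsProx φ t w₁ p₁) (hp₂ : IsProx φ t w₂ p₂)
    (hφ : ProperFn φ) (hconv : ConvexFnE φ) (ht : 0 < t) : ‖p₁ - p₂‖ ≤ ‖w₁ - w₂‖ := by
  have h := (hp₁.norm_sub_sq_le_inner hp₂ hφ hconv ht).trans (real_inner_le_norm _ _)
  rw [sq] at h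
  rcases (norm_nonneg (p₁ - p₂)).eq_or_lt with h0 | hpos
  · rw [← h0]
    positivity
  · exact le_of_mul_le_mul_left h hpos

end IsProx

section Dual

open scoped InnerProduct

variable {X Y : Type*} [NormedAddCommGroup X] [InnerProductSpace ℝ X] [CompleteSpace X]
  [NormedAddCommGroup Y] [InnerProductSpace ℝ Y] [CompleteSpace Y]
  {φ : X → EReal} {A : X →L[ℝ] Y} {r : ℝ} {z : X}

theorem IsProx.lagrangian_le (x₀ : X) (b : Y) {θ : Y} {p : X}
    (hp : IsProx φ r (z - r • (A†) θ) p) (hbot : ∀ x, φ x ≠ ⊥) (hr : 0 < r) {x : X} (hx : φ x ≠ ⊤) :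
    1 / (2 * r) * ‖p - z‖ ^ 2 + (φ p).toReal + ⟪θ, A (p - x₀) + b⟫
      ≤ 1 / (2 * r) * ‖x - z‖ ^ 2 + (φ x).toReal + ⟪θ, A (x - x₀) + b⟫ := by
  have complete_square : ∀ y : X, 1 / (2 * r) * ‖y - (z - r • (A†) θ)‖ ^ 2
      = 1 / (2 * r) * ‖y - z‖ ^ 2 + ⟪θ, A (y - x₀) + b⟫
        + (r / 2 * ‖(A†) θ‖ ^ 2 - ⟪θ, A (z - x₀) + b⟫) := by
    intro y
    have hpair : ⟪θ, A (y - x₀) + b⟫ - ⟪θ, A (z - x₀) + b⟫ = ⟪y - z, (A†) θ⟫ := by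
      rw [← inner_sub_right, ContinuousLinearMap.adjoint_inner_right, real_inner_comm,
        add_sub_add_right_eq_sub, ← map_sub, sub_sub_sub_cancel_right]
    rw [show y - (z - r • (A†) θ) = (y - z) + r • (A†) θ by abel, norm_add_sq_real,
      real_inner_smul_right, norm_smul, Real.norm_eq_abs, abs_of_pos hr]
    field_simp
    linear_combination (-2 * r) * hpair
  have h := hp.toReal_le hbot hx
  rw [complete_square, complete_square] at h
  linarith

theorem IsProx.norm_map_sub_le {θ₁ θ₂ : Y} {p₁ p₂ : X} (hp₁ : IsProx φ r (z - r • (A†) θ₁) p₁)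
    (hp₂ : IsProx φ r (z - r • (A†) θ₂) p₂) (hφ : ProperFn φ) (hconv : ConvexFnE φ) (hr : 0 < r) :
    ‖A (p₁ - p₂)‖ ≤ r * ‖A‖ ^ 2 * ‖θ₁ - θ₂‖ := calc
  _ ≤ ‖A‖ * ‖p₁ - p₂‖ := A.le_opNorm _
  _ ≤ ‖A‖ * ‖(z - r • (A†) θ₁) - (z - r • (A†) θ₂)‖ := by
    gcongr
    exact hp₁.norm_sub_le hp₂ hφ hconv hr
  _ = ‖A‖ * (r * ‖(A†) (θ₂ - θ₁)‖) := by
    rw [sub_sub_sub_cancel_left, ← smul_sub, ← map_sub, norm_smul, Real.norm_eq_abs,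
      abs_of_pos hr]
  _ ≤ ‖A‖ * (r * (‖A†‖ * ‖θ₂ - θ₁‖)) := by
    gcongr
    exact (A†).le_opNorm _
  _ = r * ‖A‖ ^ 2 * ‖θ₁ - θ₂‖ := by
    rw [LinearIsometryEquiv.norm_map, norm_sub_rev]
    ring

end Dual

theorem stmt_12_general {X Y : Type*} [NormedAddCommGroup X] [InnerProductSpace ℝ X] [CompleteSpace X]
    [NormedAddCommGroup Y] [InnerProductSpace ℝ Y] [CompleteSpace Y]
    (φ : X → EReal) (hproper : ProperFn φ) (hconv : ConvexFnE φ)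
    (A : X →L[ℝ] Y) (r : ℝ) (hr : 0 < r) (z x₀ : X) (b : Y)
    -- `pbar θ` is the proximal point `prox_{rφ}(z - r A* θ)`
    (pbar : Y → X)
    (hpbar : ∀ θ : Y, IsProx φ r (z - r • (ContinuousLinearMap.adjoint A) θ) (pbar θ))
    -- the dual objective
    (d : Y → ℝ)
    (hd : ∀ θ : Y, d θ =
      (1 / (2 * r)) * ‖pbar θ - z‖ ^ 2 + (φ (pbar θ)).toReal
        + (inner ℝ θ (A (pbar θ - x₀) + b) : ℝ)) :
    ConcaveOn ℝ Set.univ d ∧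
    (∀ θ : Y, HasGradientAt d (A (pbar θ - x₀) + b) θ) ∧
    (∀ θ₁ θ₂ : Y, ‖(A (pbar θ₁ - x₀) + b) - (A (pbar θ₂ - x₀) + b)‖ ≤ r * ‖A‖ ^ 2 * ‖θ₁ - θ₂‖) := by
  have hsup : ∀ θ₁ θ₂, d θ₂ ≤ d θ₁ + ⟪A (pbar θ₁ - x₀) + b, θ₂ - θ₁⟫ := fun θ₁ θ₂ => by
    obtain ⟨hbot, x, hx⟩ := hproper
    have h := (hpbar θ₂).lagrangian_le x₀ b hbot hr ((hpbar θ₁).apply_ne_top hx)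
    rw [hd, hd, inner_sub_right, real_inner_comm θ₁, real_inner_comm θ₂]
    linarith
  have hlip : ∀ θ₁ θ₂, ‖(A (pbar θ₁ - x₀) + b) - (A (pbar θ₂ - x₀) + b)‖
      ≤ r * ‖A‖ ^ 2 * ‖θ₁ - θ₂‖ := fun θ₁ θ₂ => by
    rw [add_sub_add_right_eq_sub, ← map_sub, sub_sub_sub_cancel_right]
    exact (hpbar θ₁).norm_map_sub_le (hpbar θ₂) hproper hconv hr
  have hcont : Continuous fun θ => A (pbar θ - x₀) + b :=
    (LipschitzWith.of_dist_le' fun θ₁ θ₂ => by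
      simpa only [dist_eq_norm] using hlip θ₁ θ₂).continuous
  exact ⟨concaveOn_univ_of_le_add_inner hsup,
    fun θ => hasGradientAt_of_le_add_inner hsup hcont.continuousAt, hlip⟩

theorem stmt_12 {X Y : Type*} [NormedAddCommGroup X] [InnerProductSpace ℝ X] [CompleteSpace X]
    [NormedAddCommGroup Y] [InnerProductSpace ℝ Y] [CompleteSpace Y]
    (φ : X → EReal) (hproper : ProperFn φ) (hconv : ConvexFnE φ)
    (hlsc : LowerSemicontinuous φ)
    (A : X →L[ℝ] Y) (r : ℝ) (hr : 0 < r) (z x₀ : X) (b : Y)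
    -- `pbar θ` is the proximal point `prox_{rφ}(z - r A* θ)`
    (pbar : Y → X)
    (hpbar : ∀ θ : Y, IsProx φ r (z - r • (ContinuousLinearMap.adjoint A) θ) (pbar θ))
    -- the dual objective
    (d : Y → ℝ)
    (hd : ∀ θ : Y, d θ =
      (1 / (2 * r)) * ‖pbar θ - z‖ ^ 2 + (φ (pbar θ)).toReal
        + (inner ℝ θ (A (pbar θ - x₀) + b) : ℝ)) :
    ConcaveOn ℝ Set.univ d ∧
    (∀ θ : Y, HasGradientAt d (A (pbar θ - x₀) + b) θ) ∧
    (∀ θ₁ θ₂ : Y, ‖(A (pbar θ₁ - x₀) + b) - (A (pbar θ₂ - x₀) + b)‖ ≤ r * ‖A‖ ^ 2 * ‖θ₁ - θ₂‖) :=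
  stmt_12_general φ hproper hconv A r hr z x₀ b pbar hpbar d hd
end
end

section
/- Let X, Y be real Hilbert spaces, 𝔄 ⊂ Y nonempty closed convex bounded with M_𝔄 := sup_{θ∈𝔄}‖θ‖, and φ : X → (−∞,+∞] proper closed convex. For affine maps w_i(x) = D_i(x−u_i)+d_i (i=1,2) with D_i ∈ L(X,Y), set Ψ_i(x) = φ(x) + σ_𝔄(w_i(x)). Then for all x, y ∈ dom φ: |(Ψ₁(x) − Ψ₂(x)) − (Ψ₁(y) − Ψ₂(y))| ≤ M_𝔄 ( ‖D₁−D₂‖_{L(X,Y)} (‖x−y‖ + 2‖y−u₁‖) + 2‖d₁ − d₂ − D₂(u₁−u₂)‖_Y ). -/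
noncomputable section

/-
On `dom φ` the term `φ` cancels, so `Ψ₁ - Ψ₂ = σ_𝔄(w₁) - σ_𝔄(w₂)` there. Since `𝔄` lies in the
ball of radius `M`, the support function `σ_𝔄` is `M`-Lipschitz, and
`w₁(z) - w₂(z) = (D₁ - D₂)(z - u₁) + (d₁ - d₂ - D₂(u₁ - u₂))`. Bounding the difference at `x` and
at `y` separately and using `‖x - u₁‖ ≤ ‖x - y‖ + ‖y - u₁‖` gives the estimate.
-/

lemma EReal.toReal_add_coe_sub_toReal_add_coe {c : EReal} (hc_top : c ≠ ⊤) (hc_bot : c ≠ ⊥)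
    (a b : ℝ) : (c + a).toReal - (c + b).toReal = a - b := by
  rw [EReal.toReal_add hc_top hc_bot (EReal.coe_ne_top a) (EReal.coe_ne_bot a),
    EReal.toReal_add hc_top hc_bot (EReal.coe_ne_top b) (EReal.coe_ne_bot b),
    EReal.toReal_coe, EReal.toReal_coe]
  ring

lemma norm_affine_sub_affine_le {𝕜 E F : Type*} [NontriviallyNormedField 𝕜]
    [SeminormedAddCommGroup E] [NormedSpace 𝕜 E] [SeminormedAddCommGroup F] [NormedSpace 𝕜 F]
    (D₁ D₂ : E →L[𝕜] F) (u₁ u₂ z : E) (d₁ d₂ : F) :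
    ‖(D₁ (z - u₁) + d₁) - (D₂ (z - u₂) + d₂)‖
      ≤ ‖D₁ - D₂‖ * ‖z - u₁‖ + ‖d₁ - d₂ - D₂ (u₁ - u₂)‖ := by
  have h : (D₁ (z - u₁) + d₁) - (D₂ (z - u₂) + d₂)
      = (D₁ - D₂) (z - u₁) + (d₁ - d₂ - D₂ (u₁ - u₂)) := by
    simp only [sub_apply, map_sub]
    abel
  rw [h]
  exact (norm_add_le _ _).trans (add_le_add_left ((D₁ - D₂).le_opNorm _) _)

lemma nonneg_of_forall_norm_le {E : Type*} [SeminormedAddCommGroup E] {A : Set E} {M : ℝ}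
    (hne : A.Nonempty) (hM : ∀ θ ∈ A, ‖θ‖ ≤ M) : 0 ≤ M :=
  let ⟨θ, hθ⟩ := hne
  (norm_nonneg θ).trans (hM θ hθ)

section supportFn

variable {Y : Type*} [NormedAddCommGroup Y] [InnerProductSpace ℝ Y] {𝔄 : Set Y} {M : ℝ}

lemma bddAbove_inner_image_of_norm_le (hM : ∀ θ ∈ 𝔄, ‖θ‖ ≤ M) (y : Y) :
    BddAbove ((fun v => (inner ℝ v y : ℝ)) '' 𝔄) := by
  refine ⟨M * ‖y‖, ?_⟩
  rintro r ⟨θ, hθ, rfl⟩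
  exact (real_inner_le_norm θ y).trans (mul_le_mul_of_nonneg_right (hM θ hθ) (norm_nonneg y))

lemma supportFn_le_add_mul_norm_sub (hne : 𝔄.Nonempty) (hM : ∀ θ ∈ 𝔄, ‖θ‖ ≤ M) (a b : Y) :
    supportFn 𝔄 a ≤ supportFn 𝔄 b + M * ‖a - b‖ := by
  refine csSup_le (hne.image _) ?_
  rintro r ⟨θ, hθ, rfl⟩
  have hb : (inner ℝ θ b : ℝ) ≤ supportFn 𝔄 b :=
    le_csSup (bddAbove_inner_image_of_norm_le hM b) ⟨θ, hθ, rfl⟩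
  have hab : (inner ℝ θ (a - b) : ℝ) ≤ M * ‖a - b‖ :=
    (real_inner_le_norm _ _).trans (mul_le_mul_of_nonneg_right (hM θ hθ) (norm_nonneg _))
  calc (inner ℝ θ a : ℝ) = inner ℝ θ b + inner ℝ θ (a - b) := by
        rw [← inner_add_right, add_sub_cancel]
    _ ≤ supportFn 𝔄 b + M * ‖a - b‖ := add_le_add hb hab

lemma abs_supportFn_sub_le (hne : 𝔄.Nonempty) (hM : ∀ θ ∈ 𝔄, ‖θ‖ ≤ M) (a b : Y) :
    |supportFn 𝔄 a - supportFn 𝔄 b| ≤ M * ‖a - b‖ := by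
  have hab := supportFn_le_add_mul_norm_sub hne hM a b
  have hba := supportFn_le_add_mul_norm_sub hne hM b a
  rw [norm_sub_rev] at hba
  exact abs_sub_le_iff.mpr ⟨by linarith, by linarith⟩

lemma abs_supportFn_affine_sub_le {X : Type*} [NormedAddCommGroup X] [InnerProductSpace ℝ X]
    (hne : 𝔄.Nonempty) (hM : ∀ θ ∈ 𝔄, ‖θ‖ ≤ M)
    (D₁ D₂ : X →L[ℝ] Y) (u₁ u₂ z : X) (d₁ d₂ : Y) :
    |supportFn 𝔄 (D₁ (z - u₁) + d₁) - supportFn 𝔄 (D₂ (z - u₂) + d₂)|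
      ≤ M * (‖D₁ - D₂‖ * ‖z - u₁‖ + ‖d₁ - d₂ - D₂ (u₁ - u₂)‖) :=
  (abs_supportFn_sub_le hne hM _ _).trans <| mul_le_mul_of_nonneg_left
    (norm_affine_sub_affine_le D₁ D₂ u₁ u₂ z d₁ d₂) (nonneg_of_forall_norm_le hne hM)

end supportFn

theorem stmt_15_general {X Y : Type*} [NormedAddCommGroup X] [InnerProductSpace ℝ X]
    [NormedAddCommGroup Y] [InnerProductSpace ℝ Y]
    (𝔄 : Set Y) (M : ℝ)
    (hne : 𝔄.Nonempty)
    (hM : ∀ θ ∈ 𝔄, ‖θ‖ ≤ M)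
    (φ : X → EReal) (hproper : ProperFn φ)
    (D₁ D₂ : X →L[ℝ] Y) (u₁ u₂ : X) (d₁ d₂ : Y)
    (Ψ₁ Ψ₂ : X → EReal)
    (hΨ₁ : ∀ x, Ψ₁ x = φ x + ((supportFn 𝔄 (D₁ (x - u₁) + d₁) : ℝ) : EReal))
    (hΨ₂ : ∀ x, Ψ₂ x = φ x + ((supportFn 𝔄 (D₂ (x - u₂) + d₂) : ℝ) : EReal)) :
    ∀ x y : X, φ x ≠ ⊤ → φ y ≠ ⊤ →
      |((Ψ₁ x).toReal - (Ψ₂ x).toReal) - ((Ψ₁ y).toReal - (Ψ₂ y).toReal)| ≤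
        M * (‖D₁ - D₂‖ * (‖x - y‖ + 2 * ‖y - u₁‖) + 2 * ‖d₁ - d₂ - D₂ (u₁ - u₂)‖) := by
  intro x y hx hy
  have hM0 : 0 ≤ M := nonneg_of_forall_norm_le hne hM
  simp only [hΨ₁, hΨ₂, EReal.toReal_add_coe_sub_toReal_add_coe hx (hproper.1 x),
    EReal.toReal_add_coe_sub_toReal_add_coe hy (hproper.1 y)]
  have hxy : ‖x - u₁‖ ≤ ‖x - y‖ + ‖y - u₁‖ := norm_sub_le_norm_sub_add_norm_sub x y u₁
  calc _ ≤ _ := abs_sub _ _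
    _ ≤ M * (‖D₁ - D₂‖ * ‖x - u₁‖ + ‖d₁ - d₂ - D₂ (u₁ - u₂)‖)
          + M * (‖D₁ - D₂‖ * ‖y - u₁‖ + ‖d₁ - d₂ - D₂ (u₁ - u₂)‖) :=
      add_le_add (abs_supportFn_affine_sub_le hne hM D₁ D₂ u₁ u₂ x d₁ d₂)
        (abs_supportFn_affine_sub_le hne hM D₁ D₂ u₁ u₂ y d₁ d₂)
    _ = M * (‖D₁ - D₂‖ * (‖x - u₁‖ + ‖y - u₁‖) + 2 * ‖d₁ - d₂ - D₂ (u₁ - u₂)‖) := by ring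
    _ ≤ _ := by gcongr M * (_ * ?_ + _); linarith

theorem stmt_15 {X Y : Type*} [NormedAddCommGroup X] [InnerProductSpace ℝ X] [CompleteSpace X]
    [NormedAddCommGroup Y] [InnerProductSpace ℝ Y] [CompleteSpace Y]
    (𝔄 : Set Y) (M : ℝ)
    (hne : 𝔄.Nonempty) (hclosed : IsClosed 𝔄) (hconvA : Convex ℝ 𝔄)
    (hM : ∀ θ ∈ 𝔄, ‖θ‖ ≤ M)
    (φ : X → EReal) (hproper : ProperFn φ) (hconv : ConvexFnE φ)
    (hlsc : LowerSemicontinuous φ)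
    (D₁ D₂ : X →L[ℝ] Y) (u₁ u₂ : X) (d₁ d₂ : Y)
    (Ψ₁ Ψ₂ : X → EReal)
    (hΨ₁ : ∀ x, Ψ₁ x = φ x + ((supportFn 𝔄 (D₁ (x - u₁) + d₁) : ℝ) : EReal))
    (hΨ₂ : ∀ x, Ψ₂ x = φ x + ((supportFn 𝔄 (D₂ (x - u₂) + d₂) : ℝ) : EReal)) :
    ∀ x y : X, φ x ≠ ⊤ → φ y ≠ ⊤ →
      |((Ψ₁ x).toReal - (Ψ₂ x).toReal) - ((Ψ₁ y).toReal - (Ψ₂ y).toReal)| ≤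
        M * (‖D₁ - D₂‖ * (‖x - y‖ + 2 * ‖y - u₁‖) + 2 * ‖d₁ - d₂ - D₂ (u₁ - u₂)‖) :=
  stmt_15_general 𝔄 M hne hM φ hproper D₁ D₂ u₁ u₂ d₁ d₂ Ψ₁ Ψ₂ hΨ₁ hΨ₂
end
end
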